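/- Let f, g : U → ℝ be smooth on a connected open set U ⊆ ℂⁿ (n ≥ 2), and let G : U × (ℂⁿ\{0}) → ℝ be smooth, positive, satisfy G(z,λv) = |λ|²G(z,v), with positive definite Levi matrix G_{ij̄} = ∂²G/∂vⁱ∂v̄ʲ. If (∂f/∂zⁱ − ∂g/∂zⁱ)·G = Σ_m (∂f/∂z^m − ∂g/∂z^m) v^m · ∂G/∂vⁱ holds for all (z,v) and all i, then f − g is constant on U. -/

import Mathlib

open Complex
open scoped ComplexOrder

/-- Wirtinger derivative `∂f/∂zⁱ`. -/
noncomputable def wD {n : ℕ} (f : (Fin n → ℂ) → ℂ) (i : Fin n) (z : Fin n → ℂ) : ℂ :=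
  (fderiv ℝ f z (Pi.single i 1) - Complex.I * fderiv ℝ f z (Pi.single i Complex.I)) / 2

/-- Conjugate Wirtinger derivative `∂f/∂z̄ⁱ`. -/
noncomputable def wDbar {n : ℕ} (f : (Fin n → ℂ) → ℂ) (i : Fin n) (z : Fin n → ℂ) : ℂ :=
  (fderiv ℝ f z (Pi.single i 1) + Complex.I * fderiv ℝ f z (Pi.single i Complex.I)) / 2

-- casting lemma: fderiv of ofReal ∘ h
lemma fderiv_ofReal_comp {n : ℕ} {h : (Fin n → ℂ) → ℝ} {z : Fin n → ℂ}
    (hd : DifferentiableAt ℝ h z) :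
    fderiv ℝ (fun w => ((h w : ℂ))) z = Complex.ofRealCLM.comp (fderiv ℝ h z) :=
  (Complex.ofRealCLM.hasFDerivAt.comp z hd.hasFDerivAt).fderiv

lemma wD_real_eq_zero {n : ℕ} {h : (Fin n → ℂ) → ℝ} {z : Fin n → ℂ}
    (hd : DifferentiableAt ℝ h z) (i : Fin n)
    (hw : wD (fun w => ((h w : ℂ))) i z = 0) :
    fderiv ℝ h z (Pi.single i 1) = 0 ∧ fderiv ℝ h z (Pi.single i Complex.I) = 0 := by
  have hc := fderiv_ofReal_comp hd
  rw [wD, hc] at hw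
  simp only [ContinuousLinearMap.comp_apply, Complex.ofRealCLM_apply, div_eq_zero_iff] at hw
  have hw' := hw.resolve_right (by norm_num)
  have h1 := congrArg Complex.re hw'
  have h2 := congrArg Complex.im hw'
  simp [Complex.sub_re, Complex.mul_re, Complex.sub_im, Complex.mul_im] at h1 h2
  exact ⟨h1, by simpa using h2⟩

-- if the fderiv of a real function vanishes on the basic directions, it is zero
lemma fderiv_eq_zero_of_directions {n : ℕ} {h : (Fin n → ℂ) → ℝ} {z : Fin n → ℂ}
    (h1 : ∀ i, fderiv ℝ h z (Pi.single i 1) = 0)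
    (h2 : ∀ i, fderiv ℝ h z (Pi.single i Complex.I) = 0) :
    fderiv ℝ h z = 0 := by
  set D := fderiv ℝ h z
  ext u
  have hu : u = ∑ i, Pi.single i (u i) := (Finset.univ_sum_single u).symm
  have hsingle : ∀ i : Fin n, Pi.single i (u i) =
      (u i).re • (Pi.single i (1 : ℂ) : Fin n → ℂ) + (u i).im • (Pi.single i Complex.I : Fin n → ℂ) := by
    intro i
    have : u i = (u i).re • (1 : ℂ) + (u i).im • Complex.I := by
      simp [Complex.real_smul]
    rw [show (u i).re • (Pi.single i (1 : ℂ) : Fin n → ℂ) + (u i).im • (Pi.single i Complex.I : Fin n → ℂ)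
        = Pi.single i ((u i).re • (1 : ℂ) + (u i).im • Complex.I) by
      rw [Pi.single_add, Pi.single_smul, Pi.single_smul], ← this]
  rw [hu]
  simp only [map_sum, ContinuousLinearMap.zero_apply]
  rw [Finset.sum_congr rfl (fun i _ => congrArg D (hsingle i))]
  simp [h1, h2]
/-- Analytic content of the uniqueness of weakly Kähler metrics in a conformal class:
if `(f_i − g_i)·G = (Σ_m (f_m − g_m) v^m)·∂G/∂vⁱ` for a positive `(1,1)`-homogeneous
strongly pseudoconvex `G` on a connected open `U ⊆ ℂⁿ` (`n ≥ 2`), then `f − g` is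
constant on `U`. -/
theorem stmt_18 {n : ℕ} (hn : 2 ≤ n) (U : Set (Fin n → ℂ))
    (hU : IsOpen U) (hUconn : IsConnected U)
    (f g : (Fin n → ℂ) → ℝ)
    (hf : ContDiffOn ℝ (⊤ : ℕ∞) f U) (hg : ContDiffOn ℝ (⊤ : ℕ∞) g U)
    (G : (Fin n → ℂ) → (Fin n → ℂ) → ℝ)
    (hGsm : ContDiffOn ℝ (⊤ : ℕ∞) (fun p : (Fin n → ℂ) × (Fin n → ℂ) => G p.1 p.2)
      (U ×ˢ {v : Fin n → ℂ | v ≠ 0}))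
    (hGpos : ∀ z ∈ U, ∀ v : Fin n → ℂ, v ≠ 0 → 0 < G z v)
    (hGhom : ∀ z ∈ U, ∀ l : ℂ, l ≠ 0 → ∀ v : Fin n → ℂ, v ≠ 0 →
      G z (l • v) = ‖l‖ ^ 2 * G z v)
    -- the Levi matrix `G_{ij̄} = ∂²G/∂vⁱ∂v̄ʲ` is positive definite
    (hLevi : ∀ z ∈ U, ∀ v : Fin n → ℂ, v ≠ 0 →
      (Matrix.of fun i j =>
        wDbar (fun w => wD (fun u => (G z u : ℂ)) i w) j v).PosDef)
    -- the weakly Kähler comparison identity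
    (hmain : ∀ z ∈ U, ∀ v : Fin n → ℂ, v ≠ 0 → ∀ i,
      (wD (fun w => (f w : ℂ)) i z - wD (fun w => (g w : ℂ)) i z) * (G z v : ℂ) =
        (∑ m, (wD (fun w => (f w : ℂ)) m z - wD (fun w => (g w : ℂ)) m z) * v m) *
          wD (fun u => (G z u : ℂ)) i v) :
    ∀ z ∈ U, ∀ w ∈ U, f z - g z = f w - g w := by
  -- abbreviations
  set h : (Fin n → ℂ) → ℝ := fun y => f y - g y with hh
  -- Step 1: the Wirtinger derivatives of f - g vanish on U
  have key : ∀ z ∈ U, ∀ i,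
      wD (fun w => (f w : ℂ)) i z - wD (fun w => (g w : ℂ)) i z = 0 := by
    intro z hz
    set a : Fin n → ℂ := fun i =>
      wD (fun w => (f w : ℂ)) i z - wD (fun w => (g w : ℂ)) i z with ha
    intro i
    by_contra hak
    -- there is another index
    have : Nontrivial (Fin n) := Fin.nontrivial_iff_two_le.mpr hn
    obtain ⟨j, hj⟩ := exists_ne i
    set v : Fin n → ℂ := Pi.single i (a j) - Pi.single j (a i) with hv
    have hvne : v ≠ 0 := by
      intro h0
      apply hak
      have := congrFun h0 j
      simp [hv, Pi.single_apply, hj, hj.symm] at this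
      simpa using this
    have hS : (∑ m, a m * v m) = 0 := by
      simp only [hv, Pi.sub_apply, mul_sub, Finset.sum_sub_distrib, Pi.single_apply,
        mul_ite, mul_zero, Finset.sum_ite_eq', Finset.mem_univ, if_true]
      ring
    have hm := hmain z hz v hvne i
    rw [show (∑ m, (wD (fun w => (f w : ℂ)) m z - wD (fun w => (g w : ℂ)) m z) * v m)
        = ∑ m, a m * v m from rfl, hS, zero_mul] at hm
    have hGne : ((G z v : ℝ) : ℂ) ≠ 0 :=
      Complex.ofReal_ne_zero.mpr (hGpos z hz v hvne).ne'
    exact hak ((mul_eq_zero.mp hm).resolve_right hGne)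
  -- Step 2: the real derivative of h vanishes on U
  have hderiv : ∀ z ∈ U, fderiv ℝ h z = 0 := by
    intro z hz
    have hfz : DifferentiableAt ℝ f z :=
      (hf.differentiableOn (by simp)).differentiableAt (hU.mem_nhds hz)
    have hgz : DifferentiableAt ℝ g z :=
      (hg.differentiableOn (by simp)).differentiableAt (hU.mem_nhds hz)
    have hdz : DifferentiableAt ℝ h z := hfz.sub hgz
    have hfun : (fun w => ((h w : ℂ))) =
        (fun w => ((f w : ℂ))) - (fun w => ((g w : ℂ))) := by
      funext w; simp [hh]
    have hfd : fderiv ℝ (fun w => ((h w : ℂ))) z =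
        fderiv ℝ (fun w => ((f w : ℂ))) z - fderiv ℝ (fun w => ((g w : ℂ))) z := by
      rw [hfun]
      exact fderiv_sub (Complex.ofRealCLM.differentiable.differentiableAt.comp z hfz)
        (Complex.ofRealCLM.differentiable.differentiableAt.comp z hgz)
    have hwd : ∀ i, wD (fun w => ((h w : ℂ))) i z = 0 := by
      intro i
      have := key z hz i
      rw [wD, hfd]
      rw [wD, wD] at this
      simp only [ContinuousLinearMap.sub_apply]
      field_simp at this ⊢
      linear_combination this
    have hdir := fun i => wD_real_eq_zero hdz i (hwd i)
    exact fderiv_eq_zero_of_directions (fun i => (hdir i).1) (fun i => (hdir i).2)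
  -- Step 3: local constancy on balls
  have hloc : ∀ w ∈ U, ∃ ε > 0, Metric.ball w ε ⊆ U ∧
      ∀ x ∈ Metric.ball w ε, h x = h w := by
    intro w hw
    obtain ⟨ε, hε, hball⟩ := Metric.isOpen_iff.mp hU w hw
    refine ⟨ε, hε, hball, fun x hx => ?_⟩
    have hdiff : DifferentiableOn ℝ h (Metric.ball w ε) :=
      ((hf.differentiableOn (by simp)).sub (hg.differentiableOn (by simp))).mono hball
    exact (convex_ball w ε).is_const_of_fderivWithin_eq_zero hdiff
      (fun x hx => by
        rw [fderivWithin_of_isOpen Metric.isOpen_ball hx]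
        exact hderiv x (hball hx)) hx (Metric.mem_ball_self hε)
  -- Step 4: connectedness
  intro z hz w hw
  by_contra hne
  set S := {x : Fin n → ℂ | x ∈ U ∧ h x = h z} with hSdef
  set T := {x : Fin n → ℂ | x ∈ U ∧ h x ≠ h z} with hTdef
  have hSopen : IsOpen S := by
    rw [Metric.isOpen_iff]
    rintro x ⟨hxU, hxz⟩
    obtain ⟨ε, hε, hball, hconst⟩ := hloc x hxU
    exact ⟨ε, hε, fun y hy => ⟨hball hy, (hconst y hy).trans hxz⟩⟩
  have hTopen : IsOpen T := by
    rw [Metric.isOpen_iff]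
    rintro x ⟨hxU, hxz⟩
    obtain ⟨ε, hε, hball, hconst⟩ := hloc x hxU
    exact ⟨ε, hε, fun y hy => ⟨hball hy, by rw [hconst y hy]; exact hxz⟩⟩
  have hsub : U ⊆ S ∪ T := by
    intro x hx
    by_cases hxz : h x = h z
    · exact Or.inl ⟨hx, hxz⟩
    · exact Or.inr ⟨hx, hxz⟩
  have hSne : (U ∩ S).Nonempty := ⟨z, hz, hz, rfl⟩
  have hTne : (U ∩ T).Nonempty := ⟨w, hw, hw, fun e => hne (by
    simpa [hh] using e.symm)⟩
  obtain ⟨x, _, hxS, hxT⟩ := hUconn.isPreconnected S T hSopen hTopen hsub hSne hTne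
  exact hxT.2 hxS.2
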